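/- For g(x) = e^{x-1} and every v ∈ [0,1], α(v) := 1 - g(v) + ∫₀ᵛ min{g(y), (g(v)-g(y))/(1-g(y))} dy satisfies α(v) ≥ 1/2. -/

import Mathlib

/-!
Write `c = g v` and `t = g y`. For `t < 1`, `t ≤ (c - t) / (1 - t)` iff `1 - c ≤ (1 - t) ^ 2`,
so the minimum is `g` up to the point `y₀` with `g y₀ = 1 - √(1 - c)` and the second branch after
it (from `0` on if `y₀ ≤ 0`, i.e. if `(1 - e⁻¹) ^ 2 ≤ 1 - c`). The second branch is
`1 - (1 - c) / (1 - t)`, with primitive `c y + (1 - c) log (1 - g y)`, so `α v` is an explicit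
expression in `log`, of `w = 1 - c` in the first case and of `s = √(1 - c)` in the second. Its
minimum is about `0.5088`; the bound `1 / 2` follows from `log (1 + z) ≥ 2 z / (z + 2)`, a rational
lower bound for `log` of order six at `1`, and the positivity of two quintics on intervals.
-/

open Real Set MeasureTheory

/-- `-logLower x` is the `[3/2]` Padé approximant of `log (1 + z)` at `z = 1 / x - 1`. -/
noncomputable def logLower (x : ℝ) : ℝ :=
  (x - 1) * (10 * x ^ 2 + 19 * x + 1) / (3 * x * (x ^ 2 + 6 * x + 3))

lemma hasDerivAt_log_sub_logLower {x : ℝ} (hx : 0 < x) :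
    HasDerivAt (fun x => log x - logLower x) ((x - 1) ^ 5 / (x * (x ^ 2 + 6 * x + 3)) ^ 2) x := by
  have hN : HasDerivAt (fun x : ℝ => (x - 1) * (10 * x ^ 2 + 19 * x + 1))
      (30 * x ^ 2 + 18 * x - 18) x :=
    (((hasDerivAt_id' x).sub_const 1).fun_mul ((((hasDerivAt_pow 2 x).const_mul 10).fun_add
      ((hasDerivAt_id' x).const_mul 19)).add_const 1)).congr_deriv (by ring)
  have hD : HasDerivAt (fun x : ℝ => 3 * x * (x ^ 2 + 6 * x + 3)) (9 * x ^ 2 + 36 * x + 9) x :=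
    (((hasDerivAt_id' x).const_mul 3).fun_mul (((hasDerivAt_pow 2 x).fun_add
      ((hasDerivAt_id' x).const_mul 6)).add_const 3)).congr_deriv (by ring)
  refine ((hasDerivAt_log hx.ne').sub (hN.fun_div hD (by positivity))).congr_deriv ?_
  field_simp
  ring

lemma logLower_le_log {x : ℝ} (hx : 0 < x) : logLower x ≤ log x := by
  suffices 0 ≤ log x - logLower x by linarith
  have h₁ : log 1 - logLower 1 = 0 := by norm_num [logLower]
  have hcont : ContinuousOn (fun x => log x - logLower x) (Ioi 0) := fun y hy =>
    (hasDerivAt_log_sub_logLower hy).continuousAt.continuousWithinAt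
  rcases le_total x 1 with hx₁ | hx₁
  · have := antitoneOn_of_hasDerivWithinAt_nonpos (convex_Ioc 0 1) (hcont.mono Ioc_subset_Ioi_self)
      (fun y hy => (hasDerivAt_log_sub_logLower (interior_subset hy).1).hasDerivWithinAt)
      (fun y hy => by
        rw [interior_Ioc] at hy
        exact div_nonpos_of_nonpos_of_nonneg (Odd.pow_nonpos (by decide) (by linarith [hy.2]))
          (sq_nonneg _))
      ⟨hx, hx₁⟩ ⟨one_pos, le_rfl⟩ hx₁
    simpa only [h₁] using this
  · have := monotoneOn_of_hasDerivWithinAt_nonneg (convex_Ici 1)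
      (hcont.mono (Ici_subset_Ioi.2 one_pos))
      (fun y hy => (hasDerivAt_log_sub_logLower
        (by rw [interior_Ici] at hy; exact one_pos.trans hy)).hasDerivWithinAt)
      (fun y hy => by
        rw [interior_Ici] at hy
        exact div_nonneg (pow_nonneg (by linarith [mem_Ioi.1 hy]) 5) (sq_nonneg _))
      self_mem_Ici hx₁ hx₁
    simpa only [h₁] using this

lemma log_one_sub_exp_neg_one_le : log (1 - exp (-1)) ≤ -0.45 := by
  set E := exp (-1)
  have hE₀ : 0.36787944116 < E := exp_neg_one_gt_d9
  have hE₁ : E < 1 := by linarith [exp_neg_one_lt_d9]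
  have h := le_log_one_add_of_nonneg (div_nonneg (exp_pos (-1)).le (sub_pos.2 hE₁).le)
  have hne : 1 - E ≠ 0 := by linarith
  rw [show 1 + E / (1 - E) = (1 - E)⁻¹ by field_simp; ring, log_inv,
    show 2 * (E / (1 - E)) / (E / (1 - E) + 2) = 2 * E / (2 - E) by field_simp; ring,
    div_le_iff₀ (by linarith)] at h
  nlinarith

lemma half_le_one_branch_formula {w : ℝ} (hw₀ : (1 - exp (-1)) ^ 2 ≤ w) (hw₁ : w ≤ 1 - exp (-1)) :
    1 / 2 ≤ 1 + (1 - w) * log (1 - w) + w * log w - w * log (1 - exp (-1)) := by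
  have hE₀ := exp_neg_one_gt_d9
  have hE₁ := exp_neg_one_lt_d9
  have hw₂ : 0.3995 ≤ w := by nlinarith
  have hw₃ : w ≤ 0.6322 := by linarith
  have hbound : 1 / 2 ≤ 1 + (1 - w) * logLower (1 - w) + w * logLower w + 0.45 * w := by
    have hpoly : 0 ≤ 27 / 20 * w ^ 5 - 466 / 5 * w ^ 4 + 535 / 4 * w ^ 3 + 1661 / 10 * w ^ 2
        - 335 / 2 * w + 35 := by
      nlinarith [mul_nonneg (sub_nonneg.2 hw₂) (sub_nonneg.2 hw₃), sq_nonneg (w - 0.4),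
        mul_nonneg (sub_nonneg.2 hw₂) (sq_nonneg (w - 0.4)),
        mul_nonneg (sub_nonneg.2 hw₃) (sq_nonneg (w - 0.4))]
    -- with `1 - w` named `u`, `field_simp` normalizes both denominators alike
    obtain ⟨u, rfl⟩ : ∃ u, w = 1 - u := ⟨1 - w, by ring⟩
    have hu : 0 < u := by linarith
    rw [← sub_nonneg, sub_sub_cancel]
    refine (div_nonneg hpoly (by positivity :
      (0:ℝ) ≤ 3 * (u ^ 2 + 6 * u + 3) * ((1 - u) ^ 2 + 6 * (1 - u) + 3))).trans_eq ?_
    unfold logLower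
    field_simp
    ring
  have h₁ := mul_le_mul_of_nonneg_left (logLower_le_log (x := 1 - w) (by linarith))
    (by linarith : 0 ≤ 1 - w)
  have h₂ := mul_le_mul_of_nonneg_left (logLower_le_log (x := w) (by linarith))
    (by linarith : 0 ≤ w)
  have h₃ := mul_le_mul_of_nonneg_left log_one_sub_exp_neg_one_le (by linarith : 0 ≤ w)
  linarith

lemma half_le_two_branch_formula {s : ℝ} (hs₀ : 0 < s) (hs₁ : s ≤ 1 - exp (-1)) :
    1 / 2 ≤ 1 - exp (-1) - s + s ^ 2 + (1 - s ^ 2) * log (1 + s) + s ^ 2 * log s := by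
  have hE₀ := exp_neg_one_gt_d9
  have hE₁ := exp_neg_one_lt_d9
  have hs₂ : s ≤ 0.6322 := by linarith
  have hbound :
      1 / 2 ≤ 1 - 0.36788 - s + s ^ 2 + (1 - s ^ 2) * (2 * s / (s + 2)) + s ^ 2 * logLower s := by
    have hpoly : 0 ≤ 7 * s ^ 5 + 14 * s ^ 4 + 234909 / 25000 * s ^ 3 - 77591 / 3125 * s ^ 2
        + 19727 / 5000 * s + 29727 / 12500 := by
      nlinarith [mul_nonneg (mul_nonneg hs₀.le (sub_nonneg.2 hs₂)) (sq_nonneg (s - 0.58)),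
        sq_nonneg (s - 0.58), mul_nonneg hs₀.le (sq_nonneg (s - 0.58)), pow_nonneg hs₀.le 3,
        pow_nonneg hs₀.le 4, pow_nonneg hs₀.le 5]
    rw [← sub_nonneg]
    refine (div_nonneg hpoly
      (by positivity : (0:ℝ) ≤ 3 * (s + 2) * (s ^ 2 + 6 * s + 3))).trans_eq ?_
    unfold logLower
    field_simp
    ring
  have h₁ := mul_le_mul_of_nonneg_left (le_log_one_add_of_nonneg hs₀.le)
    (by nlinarith : 0 ≤ 1 - s ^ 2)
  have h₂ := mul_le_mul_of_nonneg_left (logLower_le_log hs₀) (sq_nonneg s)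
  linarith

noncomputable def branchPrimitive (c y : ℝ) : ℝ := c * y + (1 - c) * log (1 - exp (y - 1))

lemma hasDerivAt_branchPrimitive (c : ℝ) {y : ℝ} (hy : y < 1) :
    HasDerivAt (branchPrimitive c) ((c - exp (y - 1)) / (1 - exp (y - 1))) y := by
  have ht : exp (y - 1) < 1 := exp_lt_one_iff.2 (by linarith)
  have hexp : HasDerivAt (fun y => exp (y - 1)) (exp (y - 1)) y := by
    simpa using ((hasDerivAt_id' y).sub_const 1).exp
  refine (((hasDerivAt_id' y).const_mul c).fun_add
    (((hexp.const_sub 1).log (by linarith)).const_mul (1 - c))).congr_deriv ?_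
  have hne : 1 - exp (y - 1) ≠ 0 := by linarith
  field_simp
  ring

lemma le_div_one_sub_iff {c t : ℝ} (ht : t < 1) : t ≤ (c - t) / (1 - t) ↔ 1 - c ≤ (1 - t) ^ 2 := by
  rw [le_div_iff₀ (by linarith)]
  constructor <;> intro h <;> nlinarith

lemma div_one_sub_le_iff {c t : ℝ} (ht : t < 1) : (c - t) / (1 - t) ≤ t ↔ (1 - t) ^ 2 ≤ 1 - c := by
  rw [div_le_iff₀ (by linarith)]
  constructor <;> intro h <;> nlinarith

lemma integral_min_eq {c a y₀ b : ℝ} (ha : a ≤ y₀) (hb : y₀ ≤ b) (hb₁ : b < 1)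
    (h₁ : ∀ y ∈ Ioo a y₀, 1 - c ≤ (1 - exp (y - 1)) ^ 2)
    (h₂ : ∀ y ∈ Ioo y₀ b, (1 - exp (y - 1)) ^ 2 ≤ 1 - c) :
    ∫ y in a..b, min (exp (y - 1)) ((c - exp (y - 1)) / (1 - exp (y - 1))) =
      exp (y₀ - 1) - exp (a - 1) + (branchPrimitive c b - branchPrimitive c y₀) := by
  have hlt : ∀ y ≤ b, exp (y - 1) < 1 := fun y hy => exp_lt_one_iff.2 (by linarith)
  have hbranch : ContinuousOn (fun y => (c - exp (y - 1)) / (1 - exp (y - 1))) (Iic b) :=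
    ContinuousOn.div (by fun_prop) (by fun_prop) fun y hy => (sub_pos.2 (hlt y hy)).ne'
  have hint : ∀ p q, q ≤ b → p ≤ q → IntervalIntegrable
      (fun y => min (exp (y - 1)) ((c - exp (y - 1)) / (1 - exp (y - 1)))) volume p q :=
    fun p q hq hpq => ((ContinuousOn.inf (by fun_prop) hbranch).mono (by
      rw [uIcc_of_le hpq]
      exact Icc_subset_Iic_self.trans (Iic_subset_Iic.2 hq))).intervalIntegrable
  rw [← intervalIntegral.integral_add_adjacent_intervals (hint a y₀ hb ha) (hint y₀ b le_rfl hb),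
    intervalIntegral.integral_congr_Ioo_of_le ha (g := fun y => exp (y - 1)) fun y hy =>
      min_eq_left ((le_div_one_sub_iff (hlt y (hy.2.le.trans hb))).2 (h₁ y hy)),
    intervalIntegral.integral_congr_Ioo_of_le hb
      (g := fun y => (c - exp (y - 1)) / (1 - exp (y - 1))) fun y hy =>
      min_eq_right ((div_one_sub_le_iff (hlt y hy.2.le)).2 (h₂ y hy)),
    intervalIntegral.integral_comp_sub_right (fun y => exp y), integral_exp,
    intervalIntegral.integral_eq_sub_of_hasDerivAt (f := branchPrimitive c)]
  · rw [uIcc_of_le hb]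
    exact fun y hy => hasDerivAt_branchPrimitive c (hy.2.trans_lt hb₁)
  · exact (hbranch.mono (by rw [uIcc_of_le hb]; exact Icc_subset_Iic_self)).intervalIntegrable

noncomputable def alpha (v : ℝ) : ℝ :=
  1 - exp (v - 1) +
    ∫ y in (0:ℝ)..v, min (exp (y - 1)) ((exp (v - 1) - exp (y - 1)) / (1 - exp (y - 1)))

lemma half_le_alpha_one : 1 / 2 ≤ alpha 1 := by
  have hmin : EqOn (fun y => min (exp (y - 1)) ((exp (1 - 1) - exp (y - 1)) / (1 - exp (y - 1))))
      (fun y => exp (y - 1)) (Ioo 0 1) := fun y hy => by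
    have ht : exp (y - 1) < 1 := exp_lt_one_iff.2 (by linarith [hy.2])
    simp only [sub_self, exp_zero, div_self (sub_pos.2 ht).ne', min_eq_left ht.le]
  rw [alpha, intervalIntegral.integral_congr_Ioo_of_le zero_le_one hmin,
    intervalIntegral.integral_comp_sub_right (fun y => exp y), integral_exp]
  norm_num
  linarith [exp_neg_one_lt_d9]

lemma half_le_alpha_of_sq_le {v : ℝ} (hv₀ : 0 ≤ v) (hv₁ : v < 1)
    (h : (1 - exp (-1)) ^ 2 ≤ 1 - exp (v - 1)) : 1 / 2 ≤ alpha v := by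
  rw [alpha]
  set c := exp (v - 1)
  have hcE : exp (-1) ≤ c := exp_le_exp.2 (by linarith)
  have hlogc : log c = v - 1 := log_exp _
  have h₂ : ∀ y ∈ Ioo 0 v, (1 - exp (y - 1)) ^ 2 ≤ 1 - c := fun y hy => by
    have ht₀ : exp (-1) < exp (y - 1) := exp_lt_exp.2 (by linarith [hy.1])
    have ht₁ : exp (y - 1) < 1 := exp_lt_one_iff.2 (by linarith [hy.2])
    nlinarith
  rw [integral_min_eq le_rfl hv₀ hv₁ (fun y hy => (lt_asymm hy.1 hy.2).elim) h₂, branchPrimitive,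
    branchPrimitive]
  have := half_le_one_branch_formula h (by linarith)
  rw [sub_sub_cancel] at this
  rw [zero_sub]
  linear_combination this + c * hlogc

lemma half_le_alpha_of_lt_sq {v : ℝ} (hv₁ : v < 1)
    (h : 1 - exp (v - 1) < (1 - exp (-1)) ^ 2) : 1 / 2 ≤ alpha v := by
  rw [alpha]
  set c := exp (v - 1)
  set s := √(1 - c)
  have hc₁ : c < 1 := exp_lt_one_iff.2 (by linarith)
  have hs₂ : s ^ 2 = 1 - c := sq_sqrt (by linarith)
  have hs₀ : 0 < s := sqrt_pos.2 (by linarith)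
  have hs₁ : s < 1 - exp (-1) := by nlinarith [exp_neg_one_lt_d9]
  have h1s : 0 < 1 - s := by linarith [exp_pos (-1)]
  set y₀ := 1 + log (1 - s)
  have hy₀ : exp (y₀ - 1) = 1 - s := by simp [y₀, exp_log h1s]
  have hlogc : v - 1 = log (1 - s) + log (1 + s) := by
    rw [← log_mul h1s.ne' (by linarith), ← log_exp (v - 1)]
    congr 1
    nlinarith
  have hy₀₀ : 0 ≤ y₀ := by
    have : exp (-1) ≤ exp (y₀ - 1) := by linarith
    linarith [exp_le_exp.1 this]
  have hy₀v : y₀ ≤ v := by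
    have := log_nonneg (by nlinarith : (1:ℝ) ≤ 1 + s)
    linarith
  have h₁ : ∀ y ∈ Ioo 0 y₀, 1 - c ≤ (1 - exp (y - 1)) ^ 2 := fun y hy => by
    have : exp (y - 1) < 1 - s := hy₀ ▸ exp_lt_exp.2 (by linarith [hy.2])
    nlinarith
  have h₂ : ∀ y ∈ Ioo y₀ v, (1 - exp (y - 1)) ^ 2 ≤ 1 - c := fun y hy => by
    have : 1 - s < exp (y - 1) := hy₀ ▸ exp_lt_exp.2 (by linarith [hy.1])
    have : exp (y - 1) < 1 := exp_lt_one_iff.2 (by linarith [hy.2])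
    nlinarith
  rw [integral_min_eq hy₀₀ hy₀v hv₁ h₁ h₂, branchPrimitive, branchPrimitive, hy₀, ← hs₂,
    sub_sub_cancel, log_pow]
  have := half_le_two_branch_formula hs₀ hs₁.le
  simp only [y₀, zero_sub, Nat.cast_ofNat]
  linear_combination this - c * hlogc - log (1 + s) * hs₂

theorem stmt_4 :
    ∀ v ∈ Set.Icc (0:ℝ) 1,
      1 - Real.exp (v - 1) +
        (∫ y in (0:ℝ)..v,
          min (Real.exp (y - 1))
            ((Real.exp (v - 1) - Real.exp (y - 1)) / (1 - Real.exp (y - 1)))) ≥ 1 / 2 := by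
  rintro v ⟨hv₀, hv₁⟩
  change 1 / 2 ≤ alpha v
  rcases hv₁.eq_or_lt with rfl | hv₁
  · exact half_le_alpha_one
  rcases le_or_gt ((1 - exp (-1)) ^ 2) (1 - exp (v - 1)) with h | h
  · exact half_le_alpha_of_sq_le hv₀ hv₁ h
  · exact half_le_alpha_of_lt_sq hv₁ h
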